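/- If P(z) is a polynomial of degree n ≥ 1 that has no zeros in the open unit disk |z| < 1, then for every R > 1, max_{|z|=R} |P(z)| ≤ ((R^n + 1)/2) · max_{|z|=1} |P(z)|. -/

import Mathlib

/-!
Write `M = maxMod P`. If every root `a` of `P` satisfies `‖z‖ ≤ ‖a‖`, then
`Re (z P'(z) / P(z)) = ∑ₐ Re (z / (z - a)) ≤ deg P / 2`, which for `deg P ≤ n` gives
`‖z P'(z)‖ ≤ ‖n P(z) - z P'(z)‖`; on the unit circle the right-hand side is `‖Q'(z)‖` for the
conjugate-reciprocal polynomial `Q(z) = zⁿ conj (P (1 / conj z))`. For a constant `‖c‖ > M` the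
polynomial `P - c` has no zeros in the closed unit disk, and applying the same estimate to it
gives first `‖n P(z) - z P'(z)‖ ≤ n M` and then `‖P'(z)‖ + ‖n P(z) - z P'(z)‖ ≤ n M` on the
circle, hence the Erdős–Lax bound `‖P'‖ ≤ n M / 2` there. The maximum principle for the
reflected polynomial extends it to `‖P'(w)‖ ≤ ‖w‖ ^ (n - 1) n M / 2` for `‖w‖ ≥ 1`, and
integrating `P'` along the ray from `z / R` to `z` gives `‖P(z)‖ ≤ M + M (Rⁿ - 1) / 2`.
-/

/-- The maximum of `|P(w)|` over the unit circle `|w| = 1`. -/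
noncomputable def maxMod (P : Polynomial ℂ) : ℝ :=
  sSup ((fun w => ‖P.eval w‖) '' {w : ℂ | ‖w‖ = 1})

open Polynomial ComplexConjugate Metric

section

variable {P : ℂ[X]} {n : ℕ} {z : ℂ}

lemma norm_eval_le_maxMod (P : ℂ[X]) {w : ℂ} (hw : ‖w‖ = 1) :
    ‖P.eval w‖ ≤ maxMod P := by
  refine le_csSup ?_ ⟨w, hw, rfl⟩
  have hsphere : {w : ℂ | ‖w‖ = 1} = sphere 0 1 := by ext; simp
  rw [hsphere]
  exact ((isCompact_sphere 0 1).image P.continuous.norm).bddAbove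

lemma maxMod_le {C : ℝ} (h : ∀ w : ℂ, ‖w‖ = 1 → ‖P.eval w‖ ≤ C) : maxMod P ≤ C :=
  csSup_le ⟨_, 1, norm_one, rfl⟩ <| by rintro _ ⟨w, hw, rfl⟩; exact h w hw

lemma norm_eval_le_maxMod_of_norm_le_one (P : ℂ[X]) (hz : ‖z‖ ≤ 1) :
    ‖P.eval z‖ ≤ maxMod P :=
  Complex.norm_le_of_forall_mem_frontier_norm_le (isBounded_ball (x := 0) (r := 1))
    P.differentiable.diffContOnCl
    (fun w hw => norm_eval_le_maxMod P (by simpa [frontier_ball] using hw))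
    (by simpa [closure_ball] using hz)

lemma one_lt_norm_of_isRoot_sub_C {c a : ℂ} (hc : maxMod P < ‖c‖) (ha : (P - C c).IsRoot a) :
    1 < ‖a‖ := by
  by_contra! h
  have hPa : P.eval a = c := by simpa [sub_eq_zero] using ha
  exact (hPa ▸ norm_eval_le_maxMod_of_norm_le_one P h).not_gt hc

lemma eval_reflect_mul_pow {m : ℕ} (hP : P.natDegree ≤ m) {w : ℂ} (hw : w ≠ 0) :
    (reflect m P).eval w * w⁻¹ ^ m = P.eval w⁻¹ := by
  have : Invertible w⁻¹ := invertibleOfNonzero (inv_ne_zero hw)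
  simpa [eval₂_id] using eval₂_reflect_mul_pow (RingHom.id ℂ) w⁻¹ m P hP

lemma norm_eval_reflect_le_maxMod {m : ℕ} (hP : P.natDegree ≤ m) {w : ℂ} (hw : ‖w‖ ≤ 1) :
    ‖(reflect m P).eval w‖ ≤ maxMod P := by
  refine (norm_eval_le_maxMod_of_norm_le_one _ hw).trans (maxMod_le fun u hu => ?_)
  have hu0 : u ≠ 0 := norm_ne_zero_iff.mp (by simp [hu])
  have h := congrArg norm (eval_reflect_mul_pow hP hu0)
  rw [norm_mul, norm_pow, norm_inv, hu, inv_one, one_pow, mul_one] at h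
  exact h ▸ norm_eval_le_maxMod P (by rw [norm_inv, hu, inv_one])

lemma norm_eval_le_pow_mul_maxMod {m : ℕ} (hP : P.natDegree ≤ m) (hz : 1 ≤ ‖z‖) :
    ‖P.eval z‖ ≤ ‖z‖ ^ m * maxMod P := by
  have hz0 : z ≠ 0 := norm_pos_iff.mp (one_pos.trans_le hz)
  have h := eval_reflect_mul_pow hP (inv_ne_zero hz0)
  rw [inv_inv] at h
  rw [← h, norm_mul, norm_pow, mul_comm]
  exact mul_le_mul_of_nonneg_left
    (norm_eval_reflect_le_maxMod hP (by rw [norm_inv]; exact inv_le_one_of_one_le₀ hz))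
    (by positivity)

lemma two_mul_re_mul_conj_sub_le {a : ℂ} (h : ‖z‖ ≤ ‖a‖) :
    2 * (z * conj (z - a)).re ≤ ‖z - a‖ ^ 2 := by
  have h2 : ‖z‖ ^ 2 ≤ ‖a‖ ^ 2 := by gcongr
  simp only [Complex.sq_norm, Complex.normSq_apply] at h2 ⊢
  simp only [Complex.mul_re, Complex.conj_re, Complex.conj_im, Complex.sub_re, Complex.sub_im]
  nlinarith

/- `Re (z p'(z) / p(z)) ≤ card s / 2` multiplied through by `‖p(z)‖ ^ 2`, so that `z` may itself
be a root of `p`. -/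
lemma two_mul_re_eval_prod_X_sub_C_le (s : Multiset ℂ) (hs : ∀ a ∈ s, ‖z‖ ≤ ‖a‖) :
    2 * (z * (s.map (X - C ·)).prod.derivative.eval z *
        conj ((s.map (X - C ·)).prod.eval z)).re ≤
      Multiset.card s * ‖(s.map (X - C ·)).prod.eval z‖ ^ 2 := by
  induction s using Multiset.induction_on with
  | empty => simp
  | cons a s ih =>
    simp only [Multiset.forall_mem_cons] at hs
    rw [Multiset.map_cons, Multiset.prod_cons, Multiset.card_cons]
    set q := (s.map (X - C ·)).prod
    have hexpand : z * ((X - C a) * q).derivative.eval z * conj (((X - C a) * q).eval z) =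
        (‖q.eval z‖ ^ 2 : ℝ) * (z * conj (z - a)) +
          (‖z - a‖ ^ 2 : ℝ) * (z * q.derivative.eval z * conj (q.eval z)) := by
      simp only [derivative_mul, derivative_sub, derivative_X, derivative_C, sub_zero, one_mul,
        eval_add, eval_mul, eval_sub, eval_X, eval_C, map_mul, Complex.ofReal_pow,
        ← Complex.mul_conj']
      ring
    rw [hexpand, Complex.add_re, Complex.re_ofReal_mul, Complex.re_ofReal_mul, eval_mul,
      eval_sub, eval_X, eval_C, norm_mul]
    push_cast
    nlinarith [two_mul_re_mul_conj_sub_le hs.1, ih hs.2, sq_nonneg ‖q.eval z‖,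
      sq_nonneg ‖z - a‖]

lemma two_mul_re_eval_derivative_mul_conj_le (hroots : ∀ a, P.IsRoot a → ‖z‖ ≤ ‖a‖) :
    2 * (z * P.derivative.eval z * conj (P.eval z)).re ≤ P.natDegree * ‖P.eval z‖ ^ 2 := by
  have h := two_mul_re_eval_prod_X_sub_C_le P.roots
    (fun a ha => hroots a (isRoot_of_mem_roots ha))
  have hP := C_leadingCoeff_mul_prod_multiset_X_sub_C
    (IsAlgClosed.card_roots_eq_natDegree (p := P))
  rw [← IsAlgClosed.card_roots_eq_natDegree]
  generalize P.leadingCoeff = c at hP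
  generalize P.roots = s at hP h ⊢
  subst hP
  set q := (s.map (X - C ·)).prod
  have hscale : z * (C c * q).derivative.eval z * conj ((C c * q).eval z) =
      (‖c‖ ^ 2 : ℝ) * (z * q.derivative.eval z * conj (q.eval z)) := by
    simp only [derivative_C_mul, eval_mul, eval_C, map_mul, Complex.ofReal_pow,
      ← Complex.mul_conj']
    ring
  rw [hscale, Complex.re_ofReal_mul, eval_mul, eval_C, norm_mul]
  nlinarith [sq_nonneg ‖c‖]

lemma norm_mul_eval_derivative_le (hP : P.natDegree ≤ n)
    (hroots : ∀ a, P.IsRoot a → ‖z‖ ≤ ‖a‖) :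
    ‖z * P.derivative.eval z‖ ≤ ‖n * P.eval z - z * P.derivative.eval z‖ := by
  have h := two_mul_re_eval_derivative_mul_conj_le hroots
  have hdeg : (P.natDegree : ℝ) ≤ n := by exact_mod_cast hP
  have hre : (n * P.eval z * conj (z * P.derivative.eval z)).re =
      n * (z * P.derivative.eval z * conj (P.eval z)).re := by
    simp only [map_mul, Complex.mul_re, Complex.mul_im, Complex.conj_re, Complex.conj_im,
      Complex.natCast_re, Complex.natCast_im]
    ring
  rw [← pow_le_pow_iff_left₀ (norm_nonneg _) (norm_nonneg _) two_ne_zero, Complex.sq_norm,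
    Complex.sq_norm, Complex.normSq_sub, hre, Complex.normSq_mul (n : ℂ),
    Complex.normSq_natCast, ← Complex.sq_norm (P.eval z)]
  nlinarith [mul_le_mul_of_nonneg_left h (Nat.cast_nonneg n),
    mul_le_mul_of_nonneg_right hdeg (sq_nonneg ‖P.eval z‖)]

lemma norm_mul_eval_sub_le_mul_maxMod (hP : P.natDegree ≤ n) (hz : ‖z‖ ≤ 1) :
    ‖n * P.eval z - z * P.derivative.eval z‖ ≤ n * maxMod P := by
  set W := n * P.eval z - z * P.derivative.eval z
  by_contra! hW
  have hn : 0 < n := by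
    refine Nat.pos_of_ne_zero fun hn => ?_
    subst hn
    simp [W, derivative_of_natDegree_zero (Nat.le_zero.mp hP)] at hW
  have hc : maxMod P < ‖W / n‖ := by
    rwa [norm_div, Complex.norm_natCast, lt_div_iff₀ (by exact_mod_cast hn), mul_comm]
  have hn0 : (n : ℂ) ≠ 0 := by exact_mod_cast hn.ne'
  -- `F = P - W / n` satisfies `z F'(z) = n F(z)`, i.e. `Re (z F'(z) / F(z)) = n > deg F / 2`.
  set F := P - C (W / n)
  have hFz : z * F.derivative.eval z = n * F.eval z := by
    simp only [F, W, derivative_sub, derivative_C, sub_zero, eval_sub, eval_C]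
    field_simp
    ring
  have h := two_mul_re_eval_derivative_mul_conj_le (P := F) (z := z)
    fun a ha => hz.trans (one_lt_norm_of_isRoot_sub_C hc ha).le
  have hFn : (F.natDegree : ℝ) ≤ n := by exact_mod_cast natDegree_sub_C (a := W / n) ▸ hP
  rw [hFz, mul_assoc, Complex.mul_conj', ← Complex.ofReal_pow, ← Complex.ofReal_natCast,
    ← Complex.ofReal_mul, Complex.ofReal_re] at h
  have hn' : (0 : ℝ) < n := by exact_mod_cast hn
  have hF0 : F.eval z = 0 := by
    have : ‖F.eval z‖ ^ 2 ≤ 0 := by nlinarith [sq_nonneg ‖F.eval z‖]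
    simpa using le_antisymm this (sq_nonneg _)
  exact (one_lt_norm_of_isRoot_sub_C hc hF0).not_ge hz

lemma norm_eval_derivative_le_mul_maxMod_div_two (hP : P.natDegree ≤ n)
    (hzero : ∀ a : ℂ, ‖a‖ < 1 → P.eval a ≠ 0) (hz : ‖z‖ = 1) :
    ‖P.derivative.eval z‖ ≤ n * maxMod P / 2 := by
  set W := n * P.eval z - z * P.derivative.eval z
  have hD : ‖z * P.derivative.eval z‖ = ‖P.derivative.eval z‖ := by rw [norm_mul, hz, one_mul]
  set D := ‖P.derivative.eval z‖
  have hDW : D ≤ ‖W‖ :=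
    hD ▸ norm_mul_eval_derivative_le hP fun a ha => hz ▸ not_lt.mp fun h => hzero a h ha
  have hWM : ‖W‖ ≤ n * maxMod P := norm_mul_eval_sub_le_mul_maxMod hP hz.le
  suffices D + ‖W‖ ≤ n * maxMod P by linarith
  by_contra! h
  have hn : 0 < n := by
    refine Nat.pos_of_ne_zero fun hn => ?_
    subst hn
    simp [D, W, derivative_of_natDegree_zero (Nat.le_zero.mp hP)] at h
  have hn0 : (n : ℂ) ≠ 0 := by exact_mod_cast hn.ne'
  -- `c` points in the direction of `W`, with `n ‖c‖ = lam` strictly between `n M` and `D + ‖W‖`.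
  set lam := (n * maxMod P + D + ‖W‖) / 2 with hlam
  have hlamW : ‖W‖ ≤ lam := by linarith [norm_nonneg (P.derivative.eval z)]
  set u := Complex.exp (W.arg * Complex.I)
  have hu : ‖u‖ = 1 := Complex.norm_exp_ofReal_mul_I _
  set c := lam * u / n
  have hc : maxMod P < ‖c‖ := by
    rw [norm_div, norm_mul, hu, Complex.norm_natCast, Complex.norm_real, Real.norm_eq_abs,
      abs_of_nonneg ((norm_nonneg W).trans hlamW), mul_one,
      lt_div_iff₀ (by exact_mod_cast hn)]
    linarith
  have hcW : n * (P - C c).eval z - z * (P - C c).derivative.eval z =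
      ((‖W‖ - lam : ℝ) : ℂ) * u := by
    calc _ = W - lam * u := by
          simp only [W, c, derivative_sub, derivative_C, sub_zero, eval_sub, eval_C]
          field_simp
          ring
      _ = _ := by
          conv_lhs => rw [← Complex.norm_mul_exp_arg_mul_I W]
          push_cast
          ring
  have key := norm_mul_eval_derivative_le (P := P - C c) (natDegree_sub_C.trans_le hP)
    fun a ha => hz ▸ (one_lt_norm_of_isRoot_sub_C hc ha).le
  rw [hcW, derivative_sub, derivative_C, sub_zero, hD, norm_mul, hu, mul_one,
    Complex.norm_real, Real.norm_eq_abs, abs_of_nonpos (by linarith)] at key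
  linarith

lemma norm_eval_le_of_norm_eval_derivative_le {A B : ℝ}
    (hA : ∀ w : ℂ, ‖w‖ = 1 → ‖P.eval w‖ ≤ A)
    (hB : ∀ w : ℂ, 1 ≤ ‖w‖ → ‖P.derivative.eval w‖ ≤ B * (n * ‖w‖ ^ (n - 1)))
    (hz : 1 ≤ ‖z‖) :
    ‖P.eval z‖ ≤ A + B * (‖z‖ ^ n - 1) := by
  set R := ‖z‖
  have hR0 : (R : ℂ) ≠ 0 := by exact_mod_cast (one_pos.trans_le hz).ne'
  set u := z / R
  have hu : ‖u‖ = 1 := by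
    rw [norm_div, Complex.norm_real, Real.norm_eq_abs, abs_norm, div_self (by positivity)]
  have hf (t : ℝ) :
      HasDerivAt (fun t : ℝ => P.eval (t * u)) (P.derivative.eval (t * u) * u) t :=
    ((P.hasDerivAt _).comp _ (hasDerivAt_mul_const u)).comp_ofReal
  have hb (t : ℝ) : HasDerivAt (fun t : ℝ => A + B * (t ^ n - 1)) (B * (n * t ^ (n - 1))) t :=
    ((hasDerivAt_pow n t).sub_const 1).const_mul B |>.const_add A
  have bound (t : ℝ) (ht : t ∈ Set.Ico 1 R) :
      ‖P.derivative.eval (t * u) * u‖ ≤ B * (n * t ^ (n - 1)) := by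
    have htu : ‖(t : ℂ) * u‖ = t := by
      rw [norm_mul, hu, mul_one, Complex.norm_real, Real.norm_eq_abs, abs_of_nonneg]
      linarith [ht.1]
    rw [norm_mul, hu, mul_one]
    have := hB _ (htu.symm ▸ ht.1)
    rwa [htu] at this
  have := image_norm_le_of_norm_deriv_right_le_deriv_boundary (a := 1) (b := R)
    (fun t _ => (hf t).continuousAt.continuousWithinAt) (fun t _ => (hf t).hasDerivWithinAt)
    (by simpa using hA u hu) hb bound ⟨hz, le_rfl⟩
  simpa [u, mul_div_cancel₀ _ hR0] using this

end

theorem ankeny_rivlin_general (P : Polynomial ℂ) (n : ℕ)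
    (hdeg : P.natDegree = n)
    (hz : ∀ z : ℂ, ‖z‖ < 1 → P.eval z ≠ 0)
    (R : ℝ) (hR : 1 < R) :
    ∀ z : ℂ, ‖z‖ = R →
      ‖P.eval z‖ ≤ (R ^ n + 1) / 2 * maxMod P := by
  intro z hzR
  have hderiv (w : ℂ) (hw : 1 ≤ ‖w‖) :
      ‖P.derivative.eval w‖ ≤ maxMod P / 2 * (n * ‖w‖ ^ (n - 1)) :=
    calc ‖P.derivative.eval w‖ ≤ ‖w‖ ^ (n - 1) * maxMod P.derivative :=
          norm_eval_le_pow_mul_maxMod (hdeg ▸ natDegree_derivative_le P) hw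
      _ ≤ ‖w‖ ^ (n - 1) * (n * maxMod P / 2) := by
          gcongr
          exact maxMod_le fun v hv => norm_eval_derivative_le_mul_maxMod_div_two hdeg.le hz hv
      _ = maxMod P / 2 * (n * ‖w‖ ^ (n - 1)) := by ring
  calc ‖P.eval z‖ ≤ maxMod P + maxMod P / 2 * (R ^ n - 1) :=
        hzR ▸ norm_eval_le_of_norm_eval_derivative_le (fun w hw => norm_eval_le_maxMod P hw)
          hderiv (hzR ▸ hR.le)
    _ = (R ^ n + 1) / 2 * maxMod P := by ring

/-- Ankeny–Rivlin: if `P` has degree `n ≥ 1`, no zeros in `|z| < 1`, and `R > 1`, then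
`max_{|z|=R} |P(z)| ≤ ((R^n + 1)/2) · max_{|z|=1} |P(z)|`. -/
theorem ankeny_rivlin (P : Polynomial ℂ) (n : ℕ) (hn : 1 ≤ n)
    (hdeg : P.natDegree = n)
    (hz : ∀ z : ℂ, ‖z‖ < 1 → P.eval z ≠ 0)
    (R : ℝ) (hR : 1 < R) :
    ∀ z : ℂ, ‖z‖ = R →
      ‖P.eval z‖ ≤ (R ^ n + 1) / 2 * maxMod P :=
  ankeny_rivlin_general P n hdeg hz R hR
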